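/- arXiv:2405.14778 — 4 statements merged into one kernel-verified Lean document; each statement's English description precedes it below -/
import Mathlib

section
/- Representer theorem for general spectral filters: Let (K)_{ij} = k(x_i,x_j), 1 ≤ i,j ≤ n, denote the Gram matrix of the scalar kernel k at the sample points, and let F̂_λ(·) = Ĉ_YX g_λ(Ĉ_X)φ(·) be the spectral-algorithm estimator, where g_λ(Ĉ_X) is defined by applying g_λ to the eigenvalues of the positive self-adjoint finite-rank operator Ĉ_X. Then for every x ∈ X, F̂_λ(x) = Σ_{i=1}^n y_i α_i(x), where α(x) = (1/n) g_λ(K/n) k_x ∈ ℝ^n, g_λ(K/n) is obtained by applying g_λ to the eigenvalues of the symmetric positive semidefinite matrix K/n, and (k_x)_i = k(x,x_i) for 1 ≤ i ≤ n. -/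
open scoped InnerProductSpace

/-- The rank-one operator `a ⊗ b : v ↦ ⟨v,b⟩ a`. -/
noncomputable def rankOne {H Y : Type*}
    [NormedAddCommGroup H] [InnerProductSpace ℝ H]
    [NormedAddCommGroup Y] [InnerProductSpace ℝ Y]
    (y : Y) (h : H) : H →L[ℝ] Y :=
  (innerSL ℝ h).smulRight y

/-- Representer theorem for general spectral filters: with the sampling operator
`S v = Σ_j v_j φ(x_j)` given by its singular value decomposition
`S = Σ_i √σ_i f_i ⊗ e_i`, the estimator `F̂_λ(x) = Ĉ_YX g_λ(Ĉ_X) φ(x)`, where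
`g_λ(Ĉ_X) = g_λ(SS*/n)` and `g_λ(K/n) = g_λ(S*S/n)` are defined by the spectral
calculus (with eigenvalues `σ_i/n` and value `g_λ(0)` on the orthogonal
complements), satisfies `F̂_λ(x) = Σ_i α_i(x) y_i` with
`α(x) = (1/n) g_λ(K/n) k_x`, `(k_x)_j = k(x,x_j)`. -/
theorem representer_theorem_spectral_filter
    {X : Type*} {H Y : Type*}
    [NormedAddCommGroup H] [InnerProductSpace ℝ H] [CompleteSpace H]
    [NormedAddCommGroup Y] [InnerProductSpace ℝ Y] [CompleteSpace Y]
    (k : X → X → ℝ) (φ : X → H)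
    (hk : ∀ x x', k x x' = ⟪φ x, φ x'⟫_ℝ)
    (n : ℕ) (hn : 0 < n) (xs : Fin n → X) (ys : Fin n → Y)
    (g : ℝ → ℝ)
    -- singular value decomposition of the sampling operator
    (m : ℕ) (σ : Fin m → ℝ) (hσ : ∀ i, 0 < σ i)
    (ev : Fin m → EuclideanSpace ℝ (Fin n)) (fv : Fin m → H)
    (hev : Orthonormal ℝ ev) (hfv : Orthonormal ℝ fv)
    (hSVD : ∀ v : EuclideanSpace ℝ (Fin n),
      ∑ j, v j • φ (xs j) = ∑ i, (Real.sqrt (σ i) * ⟪v, ev i⟫_ℝ) • fv i)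
    -- `g_λ(Ĉ_X)` via the spectral calculus for `Ĉ_X = SS*/n`
    (GC : H →L[ℝ] H)
    (hGC : ∀ w : H, GC w = (∑ i, (g (σ i / n) * ⟪w, fv i⟫_ℝ) • fv i)
      + g 0 • (w - ∑ i, ⟪w, fv i⟫_ℝ • fv i))
    -- `g_λ(K/n)` via the spectral calculus for `K/n = S*S/n`
    (GM : EuclideanSpace ℝ (Fin n) → EuclideanSpace ℝ (Fin n))
    (hGM : ∀ v : EuclideanSpace ℝ (Fin n),
      GM v = (∑ i, (g (σ i / n) * ⟪v, ev i⟫_ℝ) • ev i)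
        + g 0 • (v - ∑ i, ⟪v, ev i⟫_ℝ • ev i))
    (x : X) :
    ((n : ℝ)⁻¹ • ∑ i, rankOne (ys i) (φ (xs i)) : H →L[ℝ] Y) (GC (φ x))
      = ∑ i : Fin n,
          ((n : ℝ)⁻¹ • GM ((WithLp.equiv 2 (Fin n → ℝ)).symm fun j => k x (xs j))) i • ys i := by
  classical
  have hev' := orthonormal_iff_ite.mp hev
  have hfv' := orthonormal_iff_ite.mp hfv
  set kx : EuclideanSpace ℝ (Fin n) :=
    (WithLp.equiv 2 (Fin n → ℝ)).symm fun j => k x (xs j) with hkxdef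
  have hkxj : ∀ j, kx j = ⟪φ x, φ (xs j)⟫_ℝ := by
    intro j; simp [hkxdef, hk]
  -- S e_i = √σ_i f_i
  have hSei : ∀ i, ∑ j, ev i j • φ (xs j) = Real.sqrt (σ i) • fv i := by
    intro i
    rw [hSVD (ev i)]
    rw [Finset.sum_eq_single i]
    · rw [hev' i i]; simp
    · intro l _ hl
      rw [hev' i l, if_neg (fun h => hl h.symm)]; simp
    · intro h; exact absurd (Finset.mem_univ i) h
  -- φ(x_j) in terms of the f_i
  have hsingle : ∀ j, φ (xs j) = ∑ i, (Real.sqrt (σ i) * ev i j) • fv i := by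
    intro j
    have := hSVD (EuclideanSpace.single j (1 : ℝ))
    rw [Finset.sum_eq_single j] at this
    · simpa [EuclideanSpace.inner_single_left] using this
    · intro l _ hl; simp [EuclideanSpace.single_apply, hl]
    · intro h; exact absurd (Finset.mem_univ j) h
  have hffφ : ∀ i j, ⟪fv i, φ (xs j)⟫_ℝ = Real.sqrt (σ i) * ev i j := by
    intro i j
    rw [hsingle j, inner_sum]
    rw [Finset.sum_eq_single i]
    · rw [real_inner_smul_right, hfv' i i]; simp
    · intro l _ hl
      rw [real_inner_smul_right, hfv' i l, if_neg (fun h => hl h.symm)]; simp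
    · intro h; exact absurd (Finset.mem_univ i) h
  have hkxe : ∀ i, ⟪kx, ev i⟫_ℝ = Real.sqrt (σ i) * ⟪φ x, fv i⟫_ℝ := by
    intro i
    have h1 : ⟪kx, ev i⟫_ℝ = ∑ j, ⟪φ x, ev i j • φ (xs j)⟫_ℝ := by
      rw [PiLp.inner_apply]
      refine Finset.sum_congr rfl fun j _ => ?_
      rw [real_inner_smul_right, hkxj j]
      simp [mul_comm]
    rw [h1, ← inner_sum, hSei i, real_inner_smul_right]
  -- key pointwise identity
  have key : ∀ j, ⟪GC (φ x), φ (xs j)⟫_ℝ = GM kx j := by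
    intro j
    rw [hGC (φ x), hGM kx]
    have happ : GM kx j = GM kx j := rfl
    rw [inner_add_left, sum_inner, inner_smul_left, inner_sub_left, sum_inner]
    have hrhs : ((∑ i, (g (σ i / n) * ⟪kx, ev i⟫_ℝ) • ev i)
        + g 0 • (kx - ∑ i, ⟪kx, ev i⟫_ℝ • ev i)) j
        = (∑ i, (g (σ i / n) * ⟪kx, ev i⟫_ℝ) * ev i j)
          + g 0 * (kx j - ∑ i, ⟪kx, ev i⟫_ℝ * ev i j) := by
      have hsum : ∀ (f : Fin m → EuclideanSpace ℝ (Fin n)), (∑ i, f i) j = ∑ i, f i j := by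
        intro f
        exact map_sum (EuclideanSpace.proj j : EuclideanSpace ℝ (Fin n) →L[ℝ] ℝ) f Finset.univ
      simp [PiLp.add_apply, PiLp.smul_apply, PiLp.sub_apply, hsum, smul_eq_mul]
    rw [hrhs]
    have hterm : ∀ i, ⟪(g (σ i / n) * ⟪φ x, fv i⟫_ℝ) • fv i, φ (xs j)⟫_ℝ
        = (g (σ i / n) * ⟪kx, ev i⟫_ℝ) * ev i j := by
      intro i
      rw [real_inner_smul_left, hffφ i j, hkxe i]; ring
    have hterm2 : ∀ i, ⟪(⟪φ x, fv i⟫_ℝ) • fv i, φ (xs j)⟫_ℝ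
        = ⟪kx, ev i⟫_ℝ * ev i j := by
      intro i
      rw [real_inner_smul_left, hffφ i j, hkxe i]; ring
    rw [Finset.sum_congr rfl (fun i _ => hterm i),
      Finset.sum_congr rfl (fun i _ => hterm2 i)]
    rw [hkxj j]
    simp
  -- assemble
  have lhs_eq : ((n : ℝ)⁻¹ • ∑ i, rankOne (ys i) (φ (xs i)) : H →L[ℝ] Y) (GC (φ x))
      = ∑ i, ((n : ℝ)⁻¹ * GM kx i) • ys i := by
    rw [ContinuousLinearMap.smul_apply, ContinuousLinearMap.sum_apply, Finset.smul_sum]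
    refine Finset.sum_congr rfl fun i _ => ?_
    simp only [rankOne, ContinuousLinearMap.smulRight_apply, innerSL_apply_apply]
    rw [real_inner_comm, key i, smul_smul]
  rw [lhs_eq]
  refine Finset.sum_congr rfl fun i _ => ?_
  congr 1
end

section
/- Upper bound on the l-effective dimension under polynomial eigenvalue decay: Let (μ_i)_{i≥1} be a nonincreasing sequence of positive reals and let p ∈ (0,1], l ≥ 1 with p < l. If μ_i ≤ D₂ i^{−1/p} for all i ≥ 1 and some constant D₂ > 0, then for every λ ∈ (0,1], N_l(λ) := Σ_{i≥1} (μ_i/(μ_i+λ))^l ≤ c_{2,l} λ^{−p}, where c_{2,l} = 1 + D₂^l · p/(l−p). -/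
open scoped ENNReal
open Set MeasureTheory

/-!
Each term is at most `min 1 (D₂ ^ l * λ ^ (-l) * (i + 1) ^ (-(l / p)))`, which is decreasing in
`i + 1`, so the series is dominated by the integral of this function over `(0, ∞)`. Bounding the
integrand by `1` on `(0, λ ^ (-p)]` and by the power on `(λ ^ (-p), ∞)` gives
`λ ^ (-p) + D₂ ^ l * λ ^ (-l) * λ ^ (l - p) * p / (l - p)`, and `l / p > 1` makes the tail finite.
-/

theorem AntitoneOn.tsum_add_one_le_setLIntegral_Ioi_zero {f : ℝ → ℝ≥0∞}
    (hf : AntitoneOn f (Ioi 0)) : ∑' n : ℕ, f (n + 1) ≤ ∫⁻ x in Ioi 0, f x := by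
  have hdisj : Pairwise (Function.onFun Disjoint fun n : ℕ => Ioc (n : ℝ) (n + 1)) := by
    simpa [Order.succ_eq_add_one] using Nat.mono_cast.pairwise_disjoint_on_Ioc_succ (β := ℝ)
  have hpos : ∀ n : ℕ, ∀ x ∈ Ioc (n : ℝ) (n + 1), x ∈ Ioi 0 :=
    fun n x hx => (Nat.cast_nonneg n).trans_lt hx.1
  calc ∑' n : ℕ, f (n + 1)
      ≤ ∑' n : ℕ, ∫⁻ x in Ioc (n : ℝ) (n + 1), f x := by
        refine ENNReal.tsum_le_tsum fun n => ?_
        calc f (n + 1) = ∫⁻ _ in Ioc (n : ℝ) (n + 1), f (n + 1) := by simp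
          _ ≤ ∫⁻ x in Ioc (n : ℝ) (n + 1), f x :=
            setLIntegral_mono' measurableSet_Ioc fun x hx =>
              hf (hpos n x hx) ((hpos n x hx).trans_le hx.2) hx.2
    _ = ∫⁻ x in ⋃ n : ℕ, Ioc (n : ℝ) (n + 1), f x :=
        (lintegral_iUnion (fun _ => measurableSet_Ioc) hdisj f).symm
    _ ≤ ∫⁻ x in Ioi 0, f x := lintegral_mono_set (iUnion_subset hpos)

theorem setLIntegral_Ioi_rpow_neg_of_one_lt {s T : ℝ} (hs : 1 < s) (hT : 0 < T) :
    ∫⁻ x in Ioi T, ENNReal.ofReal (x ^ (-s)) = ENNReal.ofReal (T ^ (1 - s) / (s - 1)) := by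
  rw [← ofReal_integral_eq_lintegral_ofReal (integrableOn_Ioi_rpow_of_lt (by linarith) hT),
    integral_Ioi_rpow_of_lt (by linarith) hT]
  · congr 1
    rw [neg_div, ← div_neg]
    ring_nf
  · filter_upwards [ae_restrict_mem measurableSet_Ioi] with x hx
    exact Real.rpow_nonneg (hT.trans hx).le _

theorem setLIntegral_Ioi_zero_min_one_mul_rpow_le {c s T : ℝ} (hc : 0 ≤ c) (hs : 1 < s)
    (hT : 0 < T) :
    ∫⁻ x in Ioi 0, ENNReal.ofReal (min 1 (c * x ^ (-s)))
      ≤ ENNReal.ofReal (T + c * (T ^ (1 - s) / (s - 1))) := by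
  have head : ∫⁻ x in Ioc 0 T, ENNReal.ofReal (min 1 (c * x ^ (-s))) ≤ ENNReal.ofReal T :=
    calc ∫⁻ x in Ioc 0 T, ENNReal.ofReal (min 1 (c * x ^ (-s)))
        ≤ ∫⁻ _ in Ioc 0 T, 1 :=
          setLIntegral_mono' measurableSet_Ioc fun x _ => ENNReal.ofReal_le_one.2 (min_le_left _ _)
      _ = ENNReal.ofReal T := by rw [setLIntegral_one, Real.volume_Ioc, sub_zero]
  have tail : ∫⁻ x in Ioi T, ENNReal.ofReal (min 1 (c * x ^ (-s)))
      ≤ ENNReal.ofReal (c * (T ^ (1 - s) / (s - 1))) :=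
    calc ∫⁻ x in Ioi T, ENNReal.ofReal (min 1 (c * x ^ (-s)))
        ≤ ∫⁻ x in Ioi T, ENNReal.ofReal c * ENNReal.ofReal (x ^ (-s)) :=
          setLIntegral_mono' measurableSet_Ioi fun x _ => by
            rw [← ENNReal.ofReal_mul hc]
            exact ENNReal.ofReal_le_ofReal (min_le_right _ _)
      _ = ENNReal.ofReal (c * (T ^ (1 - s) / (s - 1))) := by
        rw [lintegral_const_mul' _ _ ENNReal.ofReal_ne_top,
          setLIntegral_Ioi_rpow_neg_of_one_lt hs hT, ENNReal.ofReal_mul hc]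
  rw [← Ioc_union_Ioi_eq_Ioi hT.le, lintegral_union measurableSet_Ioi Ioc_disjoint_Ioi_same,
    ENNReal.ofReal_add hT.le (by have := Real.rpow_nonneg hT.le (1 - s); positivity)]
  exact add_le_add head tail

theorem antitoneOn_min_one_mul_rpow {c s : ℝ} (hc : 0 ≤ c) (hs : 0 ≤ s) :
    AntitoneOn (fun x : ℝ => ENNReal.ofReal (min 1 (c * x ^ (-s)))) (Ioi 0) :=
  fun _ hx _ _ hxy => ENNReal.ofReal_le_ofReal <| min_le_min_left _ <|
    mul_le_mul_of_nonneg_left (Real.rpow_le_rpow_of_nonpos hx hxy (by linarith)) hc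

theorem div_add_rpow_le_min_one_mul_rpow {μ D lam p l x : ℝ} (hμ : 0 < μ) (hD : 0 ≤ D)
    (hlam : 0 < lam) (hl : 0 ≤ l) (hx : 0 ≤ x) (hμD : μ ≤ D * x ^ (-(1 / p))) :
    (μ / (μ + lam)) ^ l ≤ min 1 (D ^ l * lam ^ (-l) * x ^ (-(l / p))) := by
  have hratio : μ / (μ + lam) ≤ 1 := (div_le_one (by linarith)).2 (by linarith)
  refine le_min (Real.rpow_le_one (by positivity) hratio hl) ?_
  calc (μ / (μ + lam)) ^ l ≤ (D * x ^ (-(1 / p)) / lam) ^ l :=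
        Real.rpow_le_rpow (by positivity)
          (div_le_div₀ (by positivity) hμD hlam (by linarith)) hl
    _ = D ^ l * lam ^ (-l) * x ^ (-(l / p)) := by
        rw [Real.div_rpow (by positivity) hlam.le, Real.mul_rpow hD (by positivity),
          ← Real.rpow_mul hx, Real.rpow_neg hlam.le l]
        ring_nf

theorem effective_dimension_upper_bound_general
    (μ : ℕ → ℝ) (p l D₂ : ℝ)
    (hp0 : 0 < p) (hpl : p < l)
    (hμpos : ∀ i, 0 < μ i)
    (hD₂ : 0 < D₂)
    (hEVD : ∀ i : ℕ, μ i ≤ D₂ * ((i : ℝ) + 1) ^ (-(1 / p)))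
    (lam : ℝ) (hlam0 : 0 < lam) :
    ∑' i : ℕ, ENNReal.ofReal ((μ i / (μ i + lam)) ^ l)
      ≤ ENNReal.ofReal ((1 + D₂ ^ l * (p / (l - p))) * lam ^ (-p)) := by
  have hl : 0 ≤ l := (hp0.trans hpl).le
  have hs : 1 < l / p := (one_lt_div hp0).2 hpl
  set c := D₂ ^ l * lam ^ (-l) with hc_def
  have hc : 0 ≤ c := by positivity
  have hT : 0 < lam ^ (-p) := Real.rpow_pos_of_pos hlam0 _
  have split_value : lam ^ (-p) + c * ((lam ^ (-p)) ^ (1 - l / p) / (l / p - 1))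
      = (1 + D₂ ^ l * (p / (l - p))) * lam ^ (-p) := by
    have hexp : lam ^ (-l) * (lam ^ (-p)) ^ (1 - l / p) = lam ^ (-p) := by
      rw [← Real.rpow_mul hlam0.le, ← Real.rpow_add hlam0]
      congr 1
      field_simp
      ring
    have hlp : l - p ≠ 0 := by linarith
    rw [hc_def, mul_assoc, mul_div_assoc', hexp]
    field_simp
  calc ∑' i : ℕ, ENNReal.ofReal ((μ i / (μ i + lam)) ^ l)
      ≤ ∑' i : ℕ, ENNReal.ofReal (min 1 (c * ((i : ℝ) + 1) ^ (-(l / p)))) :=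
        ENNReal.tsum_le_tsum fun i => ENNReal.ofReal_le_ofReal <|
          div_add_rpow_le_min_one_mul_rpow (hμpos i) hD₂.le hlam0 hl (by positivity) (hEVD i)
    _ ≤ ∫⁻ x in Ioi 0, ENNReal.ofReal (min 1 (c * x ^ (-(l / p)))) :=
        (antitoneOn_min_one_mul_rpow hc (by linarith)).tsum_add_one_le_setLIntegral_Ioi_zero
    _ ≤ ENNReal.ofReal (lam ^ (-p) + c * ((lam ^ (-p)) ^ (1 - l / p) / (l / p - 1))) :=
        setLIntegral_Ioi_zero_min_one_mul_rpow_le hc hs hT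
    _ = ENNReal.ofReal ((1 + D₂ ^ l * (p / (l - p))) * lam ^ (-p)) := by rw [split_value]

/-- Upper bound on the `l`-effective dimension `N_l(λ) = Σ_i (μ_i/(μ_i+λ))^l`
under the polynomial eigenvalue decay `μ_i ≤ D₂ i^{-1/p}`. -/
theorem effective_dimension_upper_bound
    (μ : ℕ → ℝ) (p l D₂ : ℝ)
    (hp0 : 0 < p) (hp1 : p ≤ 1) (hl : 1 ≤ l) (hpl : p < l)
    (hμpos : ∀ i, 0 < μ i) (hμanti : Antitone μ)
    (hD₂ : 0 < D₂)
    (hEVD : ∀ i : ℕ, μ i ≤ D₂ * ((i : ℝ) + 1) ^ (-(1 / p)))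
    (lam : ℝ) (hlam0 : 0 < lam) (hlam1 : lam ≤ 1) :
    ∑' i : ℕ, ENNReal.ofReal ((μ i / (μ i + lam)) ^ l)
      ≤ ENNReal.ofReal ((1 + D₂ ^ l * (p / (l - p))) * lam ^ (-p)) :=
  effective_dimension_upper_bound_general μ p l D₂ hp0 hpl hμpos hD₂ hEVD lam hlam0
end

section
/- Lower bound on the l-effective dimension under two-sided polynomial eigenvalue decay: Let (μ_i)_{i≥1} be a nonincreasing sequence of positive reals and let p ∈ (0,1), l ≥ 1. If μ_i ≥ D₁ i^{−1/p} for all i ≥ 1 and some constant D₁ > 0, then for every λ ∈ (0,1], N_l(λ) := Σ_{i≥1} (μ_i/(μ_i+λ))^l ≥ c_{1,l} λ^{−p}, where c_{1,l} = (D₁/(D₁+1))^l · p/(l−p). -/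
open scoped ENNReal
open MeasureTheory Set

/-!
Compare the sum with an integral. Where `x ≥ i + 1` and `x ≥ λ^{-p}`, the decay bound gives
`μ_i ≥ D₁ u` with `u = x^{-1/p} ≤ λ`, and since `t ↦ t/(t+λ)` is increasing,
`μ_i/(μ_i+λ) ≥ D₁u/(D₁u+λ) ≥ (D₁/(D₁+1)) u/λ`. Hence the `i`-th term dominates the integral of
`(D₁/(D₁+1))^l λ^{-l} x^{-l/p}` over `(i+1, i+2] ∩ (λ^{-p}, ∞)`, and since `l/p > 1` the
integral of this power over `(λ^{-p}, ∞)` is exactly `(D₁/(D₁+1))^l · p/(l-p) · λ^{-p}`.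
-/

theorem div_add_le_div_add_of_le {a b c : ℝ} (hc : 0 < c) (ha : 0 ≤ a) (hab : a ≤ b) :
    a / (a + c) ≤ b / (b + c) := by
  rw [div_le_div_iff₀ (by positivity) (by linarith)]
  nlinarith

theorem div_add_one_mul_div_le_mul_div_mul_add {D u c : ℝ} (hD : 0 ≤ D) (hu : 0 ≤ u) (huc : u ≤ c)
    (hc : 0 < c) : D / (D + 1) * (u / c) ≤ D * u / (D * u + c) := by
  calc D / (D + 1) * (u / c) = D * u / (D * c + c) := by
        rw [div_mul_div_comm, add_one_mul]
    _ ≤ D * u / (D * u + c) := by gcongr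

theorem exists_nat_mem_Ioc_add {x₀ x : ℝ} (hx : x₀ < x) :
    ∃ n : ℕ, x ∈ Ioc (x₀ + n) (x₀ + n + 1) := by
  obtain ⟨n, hn⟩ := mem_iUnion.mp (eq_univ_iff_forall.mp (iUnion_Ioc_add_intCast x₀) x)
  have hn0 : 0 ≤ n := by
    have : (-1 : ℝ) < n := by linarith [hn.2]
    exact Int.lt_iff_add_one_le.mp (by exact_mod_cast this)
  lift n to ℕ using hn0
  exact ⟨n, by exact_mod_cast hn⟩

theorem setLIntegral_le_tsum_of_le_on_Ioc {f : ℝ → ℝ≥0∞} {a : ℕ → ℝ≥0∞} {x₀ : ℝ} {s : Set ℝ}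
    (hs : MeasurableSet s) (hsub : s ⊆ Ioi x₀)
    (hf : ∀ n : ℕ, ∀ x ∈ s ∩ Ioc (x₀ + n) (x₀ + n + 1), f x ≤ a n) :
    ∫⁻ x in s, f x ≤ ∑' n, a n := by
  have hcover : s ⊆ ⋃ n : ℕ, s ∩ Ioc (x₀ + n) (x₀ + n + 1) := fun x hx ↦
    mem_iUnion.mpr ((exists_nat_mem_Ioc_add (hsub hx)).imp fun _ h ↦ ⟨hx, h⟩)
  calc ∫⁻ x in s, f x ≤ ∫⁻ x in ⋃ n : ℕ, s ∩ Ioc (x₀ + n) (x₀ + n + 1), f x :=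
        lintegral_mono_set hcover
    _ ≤ ∑' n : ℕ, ∫⁻ x in s ∩ Ioc (x₀ + n) (x₀ + n + 1), f x := lintegral_iUnion_le _ _
    _ ≤ ∑' n, a n := ENNReal.tsum_le_tsum fun n ↦ ?_
  calc ∫⁻ x in s ∩ Ioc (x₀ + n) (x₀ + n + 1), f x
      ≤ ∫⁻ _ in s ∩ Ioc (x₀ + n) (x₀ + n + 1), a n :=
        setLIntegral_mono' (hs.inter measurableSet_Ioc) (hf n)
    _ = a n * volume (s ∩ Ioc (x₀ + n) (x₀ + n + 1)) := setLIntegral_const _ _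
    _ ≤ a n * volume (Ioc (x₀ + n) (x₀ + n + 1)) := by gcongr; exact inter_subset_right
    _ = a n := by simp

theorem lintegral_Ioi_ofReal_mul_rpow_neg {K c s : ℝ} (hK : 0 ≤ K) (hc : 0 < c) (hs : 1 < s) :
    ∫⁻ x in Ioi c, ENNReal.ofReal (K * x ^ (-s)) = ENNReal.ofReal (K * c ^ (1 - s) / (s - 1)) := by
  have hs' : -s < -1 := by linarith
  rw [← ofReal_integral_eq_lintegral_ofReal
      ((integrableOn_Ioi_rpow_of_lt hs' hc).const_mul K), integral_const_mul,
    integral_Ioi_rpow_of_lt hs' hc]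
  · congr 1
    rw [show -s + 1 = -(s - 1) by ring, show 1 - s = -(s - 1) by ring, div_neg, neg_div,
      neg_neg, mul_div_assoc]
  · filter_upwards [ae_restrict_mem measurableSet_Ioi] with x hx
    have : 0 < x := hc.trans hx
    positivity

theorem rpow_neg_mul_rpow_one_sub_div {lam p l : ℝ} (hlam : 0 < lam) (hp : 0 < p) (hpl : p < l) :
    lam ^ (-l) * (lam ^ (-p)) ^ (1 - l / p) / (l / p - 1) = p / (l - p) * lam ^ (-p) := by
  have hlp : l - p ≠ 0 := by linarith
  rw [← Real.rpow_mul hlam.le, ← Real.rpow_add hlam,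
    show -l + -p * (1 - l / p) = -p by field_simp; ring, show l / p - 1 = (l - p) / p by
      field_simp]
  field_simp

theorem le_div_add_rpow_of_decay {m D p l lam x y : ℝ} (hD : 0 < D) (hp : 0 < p) (hl : 0 ≤ l)
    (hlam : 0 < lam) (hy : 0 < y) (hm : D * y ^ (-(1 / p)) ≤ m) (hyx : y ≤ x)
    (hx : lam ^ (-p) ≤ x) :
    (D / (D + 1)) ^ l * lam ^ (-l) * x ^ (-(l / p)) ≤ (m / (m + lam)) ^ l := by
  have hx0 : 0 < x := hy.trans_le hyx
  have hexp : -(1 / p) ≤ 0 := neg_nonpos.mpr (one_div_pos.mpr hp).le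
  set u := x ^ (-(1 / p)) with hu
  have hu0 : 0 ≤ u := by positivity
  have hDu : D * u ≤ m := le_trans (by gcongr; exact Real.rpow_le_rpow_of_nonpos hy hyx hexp) hm
  have hulam : u ≤ lam := by
    calc u ≤ (lam ^ (-p)) ^ (-(1 / p)) := Real.rpow_le_rpow_of_nonpos (by positivity) hx hexp
      _ = lam := by rw [← Real.rpow_mul hlam.le, show -p * -(1 / p) = 1 by field_simp,
        Real.rpow_one]
  calc (D / (D + 1)) ^ l * lam ^ (-l) * x ^ (-(l / p)) = (D / (D + 1) * (u / lam)) ^ l := by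
        rw [Real.mul_rpow (by positivity) (by positivity), Real.div_rpow hu0 hlam.le, hu,
          ← Real.rpow_mul hx0.le, Real.rpow_neg hlam.le, neg_mul, one_div_mul_eq_div]
        ring
    _ ≤ (D * u / (D * u + lam)) ^ l :=
        Real.rpow_le_rpow (by positivity)
          (div_add_one_mul_div_le_mul_div_mul_add hD.le hu0 hulam hlam) hl
    _ ≤ (m / (m + lam)) ^ l :=
        Real.rpow_le_rpow (by positivity) (div_add_le_div_add_of_le hlam (by positivity) hDu) hl

theorem effective_dimension_lower_bound_general
    (μ : ℕ → ℝ) (p l D₁ : ℝ)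
    (hp0 : 0 < p) (hp1 : p < 1) (hl : 1 ≤ l)
    (hD₁ : 0 < D₁)
    (hEVD : ∀ i : ℕ, D₁ * ((i : ℝ) + 1) ^ (-(1 / p)) ≤ μ i)
    (lam : ℝ) (hlam0 : 0 < lam) (hlam1 : lam ≤ 1) :
    ENNReal.ofReal ((D₁ / (D₁ + 1)) ^ l * (p / (l - p)) * lam ^ (-p))
      ≤ ∑' i : ℕ, ENNReal.ofReal ((μ i / (μ i + lam)) ^ l) := by
  have hpl : p < l := by linarith
  have hc1 : 1 ≤ lam ^ (-p) :=
    Real.one_le_rpow_of_pos_of_le_one_of_nonpos hlam0 hlam1 (by linarith)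
  calc ENNReal.ofReal ((D₁ / (D₁ + 1)) ^ l * (p / (l - p)) * lam ^ (-p))
      = ∫⁻ x in Ioi (lam ^ (-p)),
          ENNReal.ofReal ((D₁ / (D₁ + 1)) ^ l * lam ^ (-l) * x ^ (-(l / p))) := by
        rw [lintegral_Ioi_ofReal_mul_rpow_neg (by positivity) (by positivity)
          ((one_lt_div hp0).mpr hpl), mul_assoc _ (lam ^ (-l)), mul_div_assoc,
          rpow_neg_mul_rpow_one_sub_div hlam0 hp0 hpl, mul_assoc]
    _ ≤ ∑' i : ℕ, ENNReal.ofReal ((μ i / (μ i + lam)) ^ l) :=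
        setLIntegral_le_tsum_of_le_on_Ioc measurableSet_Ioi (Ioi_subset_Ioi hc1)
          fun n x hx ↦ ENNReal.ofReal_le_ofReal <| le_div_add_rpow_of_decay hD₁ hp0
            (by linarith) hlam0 (by positivity) (hEVD n) (by linarith [hx.2.1]) hx.1.le

/-- Lower bound on the `l`-effective dimension `N_l(λ) = Σ_i (μ_i/(μ_i+λ))^l`
under the lower polynomial eigenvalue decay `μ_i ≥ D₁ i^{-1/p}` with `p ∈ (0,1)`. -/
theorem effective_dimension_lower_bound
    (μ : ℕ → ℝ) (p l D₁ : ℝ)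
    (hp0 : 0 < p) (hp1 : p < 1) (hl : 1 ≤ l)
    (hμpos : ∀ i, 0 < μ i) (hμanti : Antitone μ)
    (hD₁ : 0 < D₁)
    (hEVD : ∀ i : ℕ, D₁ * ((i : ℝ) + 1) ^ (-(1 / p)) ≤ μ i)
    (lam : ℝ) (hlam0 : 0 < lam) (hlam1 : lam ≤ 1) :
    ENNReal.ofReal ((D₁ / (D₁ + 1)) ^ l * (p / (l - p)) * lam ^ (-p))
      ≤ ∑' i : ℕ, ENNReal.ofReal ((μ i / (μ i + lam)) ^ l) :=
  effective_dimension_lower_bound_general μ p l D₁ hp0 hp1 hl hD₁ hEVD lam hlam0 hlam1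
end

section
/- Interpolation norm bound for the regularized population solution (Fourier-coefficient form): Let I be a countable index set, (μ_i)_{i∈I} reals in (0,κ²], and (a_i)_{i∈I} square-summable reals. Let g_λ : [0,κ²] → [0,∞) satisfy λ^{1−s} x^s g_λ(x) ≤ E for all s ∈ [0,1], x ∈ [0,κ²] and λ > 0. Then for all 0 ≤ γ ≤ 1, β ≥ 0 and all λ > 0: Σ_{i∈I} a_i² g_λ(μ_i)² μ_i^{2−γ} ≤ E² λ^{−(γ−β)_+} · Σ_{i∈I} a_i² μ_i^{−min(γ,β)}, where (γ−β)_+ = max(γ−β, 0). (This is the coefficient-space statement of ‖[F_λ]‖²_γ ≤ E² ‖F*‖²_{min(γ,β)} λ^{−(γ−β)_+} for the regularized population solution F_λ = C_YX g_λ(C_X) φ(·), where a_i are the Fourier coefficients of F*.) -/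
open scoped ENNReal

/-- Interpolation norm bound for the regularized population solution, in
Fourier-coefficient form: if the filter `g_λ` satisfies `λ^{1−s} x^s g_λ(x) ≤ E`
for `s ∈ [0,1]` and `x ∈ [0,κ²]`, then for `0 ≤ γ ≤ 1` and `β ≥ 0`,
`Σ a_i² g_λ(μ_i)² μ_i^{2−γ} ≤ E² λ^{−(γ−β)_+} Σ a_i² μ_i^{−min(γ,β)}`. -/
theorem regularized_population_solution_interp_norm_bound
    {ι : Type*} [Countable ι]
    (κ E : ℝ) (hκ : 0 < κ) (hE : 0 ≤ E)
    (μ : ι → ℝ) (hμpos : ∀ i, 0 < μ i) (hμle : ∀ i, μ i ≤ κ ^ 2)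
    (a : ι → ℝ) (ha : Summable fun i => (a i) ^ 2)
    (g : ℝ → ℝ → ℝ)
    (hgnonneg : ∀ lam x : ℝ, 0 < lam → 0 ≤ x → 0 ≤ g lam x)
    (hfilter : ∀ s : ℝ, 0 ≤ s → s ≤ 1 → ∀ x : ℝ, 0 ≤ x → x ≤ κ ^ 2 →
      ∀ lam : ℝ, 0 < lam → lam ^ (1 - s) * x ^ s * g lam x ≤ E)
    (γ β : ℝ) (hγ0 : 0 ≤ γ) (hγ1 : γ ≤ 1) (hβ0 : 0 ≤ β)
    (lam : ℝ) (hlam : 0 < lam) :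
    ∑' i, ENNReal.ofReal ((a i) ^ 2 * (g lam (μ i)) ^ 2 * (μ i) ^ (2 - γ))
      ≤ ENNReal.ofReal (E ^ 2 * lam ^ (-(max (γ - β) 0))) *
        ∑' i, ENNReal.ofReal ((a i) ^ 2 * (μ i) ^ (-(min γ β))) := by
  have key : ∀ i, (g lam (μ i)) ^ 2 * (μ i) ^ (2 - γ)
      ≤ E ^ 2 * lam ^ (-(max (γ - β) 0)) * (μ i) ^ (-(min γ β)) := by
    intro i
    set x := μ i with hxdef
    have hx0 : 0 < x := hμpos i
    have hxκ : x ≤ κ ^ 2 := hμle i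
    have hg0 : 0 ≤ g lam x := hgnonneg lam x hlam hx0.le
    rcases le_or_gt γ β with h | h
    · have hmax : max (γ - β) 0 = 0 := max_eq_right (by linarith)
      have hmin : min γ β = γ := min_eq_left h
      rw [hmax, hmin, neg_zero, Real.rpow_zero, mul_one]
      have h1 := hfilter 1 zero_le_one le_rfl x hx0.le hxκ lam hlam
      rw [sub_self, Real.rpow_zero, Real.rpow_one, one_mul] at h1
      have hsq : (x * g lam x) ^ 2 ≤ E ^ 2 := pow_le_pow_left₀ (by positivity) h1 2
      have hx2 : x ^ (2 - γ) = x ^ (2 : ℝ) * x ^ (-γ) := by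
        rw [← Real.rpow_add hx0]; ring_nf
      have hx2' : x ^ (2 : ℝ) = x * x := by
        rw [show (2 : ℝ) = ((2 : ℕ) : ℝ) by norm_num, Real.rpow_natCast]; ring
      calc g lam x ^ 2 * x ^ (2 - γ)
          = (x * g lam x) ^ 2 * x ^ (-γ) := by rw [hx2, hx2']; ring
        _ ≤ E ^ 2 * x ^ (-γ) :=
            mul_le_mul_of_nonneg_right hsq (Real.rpow_nonneg hx0.le _)
    · have hmax : max (γ - β) 0 = γ - β := max_eq_left (by linarith)
      have hmin : min γ β = β := min_eq_right h.le
      rw [hmax, hmin]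
      set s : ℝ := 1 - (γ - β) / 2 with hs
      have hs0 : 0 ≤ s := by rw [hs]; linarith
      have hs1 : s ≤ 1 := by rw [hs]; linarith
      have h1 := hfilter s hs0 hs1 x hx0.le hxκ lam hlam
      have h1s : 1 - s = (γ - β) / 2 := by rw [hs]; ring
      rw [h1s] at h1
      have hsq : (lam ^ ((γ - β) / 2) * x ^ s * g lam x) ^ 2 ≤ E ^ 2 :=
        pow_le_pow_left₀ (by positivity) h1 2
      have h2 : (lam ^ ((γ - β) / 2)) ^ 2 = lam ^ (γ - β) := by
        rw [← Real.rpow_natCast (lam ^ ((γ - β) / 2)) 2, ← Real.rpow_mul hlam.le]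
        norm_num
      have h3 : (x ^ s) ^ 2 = x ^ (2 - γ + β) := by
        rw [← Real.rpow_natCast (x ^ s) 2, ← Real.rpow_mul hx0.le]
        congr 1; rw [hs]; ring
      have hexp : (lam ^ ((γ - β) / 2) * x ^ s * g lam x) ^ 2
          = lam ^ (γ - β) * x ^ (2 - γ + β) * (g lam x) ^ 2 := by
        rw [mul_pow, mul_pow, h2, h3]
      rw [hexp] at hsq
      have hA : lam ^ (γ - β) * lam ^ (-(γ - β)) = 1 := by
        rw [← Real.rpow_add hlam]; simp
      have hB : x ^ (2 - γ + β) * x ^ (-β) = x ^ (2 - γ) := by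
        rw [← Real.rpow_add hx0]; ring_nf
      calc g lam x ^ 2 * x ^ (2 - γ)
          = (lam ^ (γ - β) * x ^ (2 - γ + β) * g lam x ^ 2) *
              (lam ^ (-(γ - β)) * x ^ (-β)) := by
            rw [show (lam ^ (γ - β) * x ^ (2 - γ + β) * g lam x ^ 2) *
                (lam ^ (-(γ - β)) * x ^ (-β))
              = (lam ^ (γ - β) * lam ^ (-(γ - β))) *
                (x ^ (2 - γ + β) * x ^ (-β)) * g lam x ^ 2 by ring, hA, hB]
            ring
        _ ≤ E ^ 2 * (lam ^ (-(γ - β)) * x ^ (-β)) :=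
            mul_le_mul_of_nonneg_right hsq (by positivity)
        _ = E ^ 2 * lam ^ (-(γ - β)) * x ^ (-β) := by ring
  have hC0 : 0 ≤ E ^ 2 * lam ^ (-(max (γ - β) 0)) := by positivity
  calc ∑' i, ENNReal.ofReal ((a i) ^ 2 * (g lam (μ i)) ^ 2 * (μ i) ^ (2 - γ))
      ≤ ∑' i, ENNReal.ofReal ((E ^ 2 * lam ^ (-(max (γ - β) 0))) *
          ((a i) ^ 2 * (μ i) ^ (-(min γ β)))) := by
        apply ENNReal.tsum_le_tsum
        intro i
        apply ENNReal.ofReal_le_ofReal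
        calc (a i) ^ 2 * (g lam (μ i)) ^ 2 * (μ i) ^ (2 - γ)
            = (a i) ^ 2 * ((g lam (μ i)) ^ 2 * (μ i) ^ (2 - γ)) := by ring
          _ ≤ (a i) ^ 2 * (E ^ 2 * lam ^ (-(max (γ - β) 0)) *
                (μ i) ^ (-(min γ β))) :=
              mul_le_mul_of_nonneg_left (key i) (sq_nonneg _)
          _ = (E ^ 2 * lam ^ (-(max (γ - β) 0))) *
                ((a i) ^ 2 * (μ i) ^ (-(min γ β))) := by ring
    _ = ENNReal.ofReal (E ^ 2 * lam ^ (-(max (γ - β) 0))) *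
          ∑' i, ENNReal.ofReal ((a i) ^ 2 * (μ i) ^ (-(min γ β))) := by
        simp_rw [ENNReal.ofReal_mul hC0]
        rw [ENNReal.tsum_mul_left]
end
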